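/- arXiv:2406.07655 — 8 statements merged into one kernel-verified Lean document; each statement's English description precedes it below -/
import Mathlib

section
/- For positive integers d, a, n with a ≤ d+1, the number of partitions with perimeter n (largest hook length n) into d-distinct parts each of size at least a equals the number of partitions with perimeter n into parts congruent to a modulo d+1. -/
/-- A partition: a nonempty, nonincreasing list of positive integers. -/
def IsPartition (l : List ℕ) : Prop :=
  l ≠ [] ∧ l.Pairwise (· ≥ ·) ∧ ∀ x ∈ l, 0 < x

/-- Perimeter: (largest part) + (number of parts) - 1. -/
def perimeter (l : List ℕ) : ℕ := l.headI + l.length - 1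

/-- d-distinct: consecutive parts differ by at least d. -/
def DDistinct (d : ℕ) (l : List ℕ) : Prop := l.Chain' (fun x y => y + d ≤ x)

/-!
Both sides satisfy the recurrence `F n = F (n - 1) + F (n - (d + 1))` for `n > a`, with
`F n = 0` for `n < a` and `F a = 1`, the only partition in the base case being `[a]`.
For a `d`-distinct partition with parts `≥ a`: if every part exceeds `a`, lowering each part by
`1` lowers the perimeter by `1`; otherwise the smallest part is `a`, the others are `≥ a + d`, and
deleting `a` and lowering the others by `d` lowers the perimeter by `d + 1`. For a partition into
parts `≡ a (mod d + 1)`: if every part exceeds `a`, all are `≥ a + d + 1` and lowering each by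
`d + 1` lowers the perimeter by `d + 1`; otherwise deleting a part `a` lowers it by `1`.
-/

lemma perimeter_cons (x : ℕ) (l : List ℕ) : perimeter (x :: l) = x + l.length := by
  simp [perimeter]

lemma perimeter_map_add {l : List ℕ} (hl : l ≠ []) (c : ℕ) :
    perimeter (l.map (· + c)) = perimeter l + c := by
  obtain ⟨x, l, rfl⟩ := List.exists_cons_of_ne_nil hl
  simp only [List.map_cons, perimeter_cons, List.length_map]
  omega

lemma perimeter_append_singleton {l : List ℕ} (hl : l ≠ []) (a : ℕ) :
    perimeter (l ++ [a]) = perimeter l + 1 := by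
  obtain ⟨x, l, rfl⟩ := List.exists_cons_of_ne_nil hl
  simp only [List.cons_append, perimeter_cons, List.length_append, List.length_singleton]
  omega

lemma IsPartition.perimeter_pos {l : List ℕ} (hl : IsPartition l) : 0 < perimeter l := by
  obtain ⟨hne, -, hpos⟩ := hl
  obtain ⟨x, l, rfl⟩ := List.exists_cons_of_ne_nil hne
  rw [perimeter_cons]
  exact Nat.add_pos_left (hpos x List.mem_cons_self) _

lemma eq_singleton_of_perimeter_le {l : List ℕ} {a : ℕ} (hl : l ≠ []) (hge : ∀ x ∈ l, a ≤ x)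
    (hper : perimeter l ≤ a) : l = [a] := by
  obtain ⟨x, l, rfl⟩ := List.exists_cons_of_ne_nil hl
  have hx : a ≤ x := hge x List.mem_cons_self
  rw [perimeter_cons] at hper
  obtain rfl : l = [] := List.length_eq_zero_iff.mp (by omega)
  rw [show x = a by omega]

lemma List.exists_eq_map_add {l : List ℕ} {c : ℕ} (h : ∀ x ∈ l, c ≤ x) :
    ∃ l' : List ℕ, l = l'.map (· + c) := by
  refine ⟨l.map (· - c), ?_⟩
  rw [List.map_map]
  conv_lhs => rw [← List.map_id l]
  exact List.map_congr_left fun x hx => (Nat.sub_add_cancel (h x hx)).symm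

lemma List.exists_eq_append_singleton {l : List ℕ} {a : ℕ} (hs : l.Pairwise (· ≥ ·))
    (hge : ∀ x ∈ l, a ≤ x) (ha : a ∈ l) : ∃ l', l = l' ++ [a] := by
  obtain rfl | ⟨l', b, rfl⟩ := l.eq_nil_or_concat
  · simp at ha
  rw [List.concat_eq_append] at hs hge ha ⊢
  have hb : b ≤ a := by
    rcases List.mem_append.mp ha with ha | ha
    · exact (List.pairwise_append.mp hs).2.2 a ha b List.mem_cons_self
    · exact (List.mem_singleton.mp ha).ge
  exact ⟨l', by rw [le_antisymm hb (hge b (by simp))]⟩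

lemma dDistinct_iff_isChain {d : ℕ} {l : List ℕ} :
    DDistinct d l ↔ l.IsChain (fun x y => y + d ≤ x) :=
  Iff.rfl

lemma DDistinct.pairwise {d : ℕ} {l : List ℕ} (h : DDistinct d l) :
    l.Pairwise (fun x y => y + d ≤ x) :=
  have : Trans (fun x y : ℕ => y + d ≤ x) (fun x y => y + d ≤ x) (fun x y => y + d ≤ x) :=
    ⟨fun h₁ h₂ => by omega⟩
  List.IsChain.pairwise h

lemma dDistinct_map_add (d c : ℕ) (l : List ℕ) : DDistinct d (l.map (· + c)) ↔ DDistinct d l := by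
  rw [dDistinct_iff_isChain, dDistinct_iff_isChain, List.isChain_map]
  simp only [add_right_comm _ c d, add_le_add_iff_right]

lemma dDistinct_append_singleton {d : ℕ} {l : List ℕ} {a : ℕ} :
    DDistinct d (l ++ [a]) ↔ DDistinct d l ∧ ∀ x ∈ l, a + d ≤ x := by
  constructor
  · intro h
    refine ⟨?_, fun x hx => (List.pairwise_append.mp h.pairwise).2.2 x hx a (by simp)⟩
    exact (List.isChain_append.mp h).1
  · rintro ⟨h, hge⟩
    refine List.isChain_append.mpr ⟨h, by simp, fun x hx y hy => ?_⟩
    simp only [List.head?_cons, Option.mem_def, Option.some.injEq] at hy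
    exact hy ▸ hge x (List.mem_of_mem_getLast? hx)

lemma Nat.le_of_mod_eq_mod {x a m : ℕ} (hx : 0 < x) (ham : a ≤ m) (h : x % m = a % m) :
    a ≤ x :=
  Nat.ModEq.le_of_lt_add (Nat.ModEq.symm h) (by omega)

lemma Nat.add_le_of_mod_eq_mod {x a m : ℕ} (hax : a < x) (h : x % m = a % m) : a + m ≤ x := by
  by_contra hlt
  have := Nat.ModEq.le_of_lt_add h (by omega)
  omega

-- `distinctPartitions d a n` and `congrPartitions d a n` are the sets counted by `h_d^{(a)}(n)`
-- and `f_d^{(a)}(n)`.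
def perimeterPartitions (Q : List ℕ → Prop) (n : ℕ) : Set (List ℕ) :=
  {l | IsPartition l ∧ perimeter l = n ∧ Q l}

abbrev distinctPartitions (d a : ℕ) : ℕ → Set (List ℕ) :=
  perimeterPartitions fun l => DDistinct d l ∧ ∀ x ∈ l, a ≤ x

abbrev congrPartitions (d a : ℕ) : ℕ → Set (List ℕ) :=
  perimeterPartitions fun l => ∀ x ∈ l, x % (d + 1) = a % (d + 1)

lemma perimeterPartitions_eq_of_le {Q : List ℕ → Prop} {a n : ℕ} (ha : 0 < a)
    (hQ : ∀ l, IsPartition l → Q l → ∀ x ∈ l, a ≤ x) (hQa : Q [a]) (hn : n ≤ a) :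
    perimeterPartitions Q n = {l | l = [a] ∧ n = a} := by
  ext l
  constructor
  · rintro ⟨hl, rfl, hQl⟩
    obtain rfl := eq_singleton_of_perimeter_le hl.1 (hQ l hl hQl) hn
    exact ⟨rfl, by simp [perimeter]⟩
  · rintro ⟨rfl, rfl⟩
    exact ⟨⟨by simp, by simp, by simpa using ha⟩, by simp [perimeter], hQa⟩

lemma nonempty_equiv_sum_of_sep {s t u : Set (List ℕ)} {a : ℕ} {f g : List ℕ → List ℕ}
    (hf : f.Injective) (hg : g.Injective) (hge : ∀ l ∈ s, ∀ x ∈ l, a ≤ x)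
    (ht : {l ∈ s | ∀ x ∈ l, a < x} = f '' t) (hu : {l ∈ s | a ∈ l} = g '' u) :
    Nonempty (s ≃ t ⊕ u) := by
  classical
  have hs : s = f '' t ∪ g '' u := by
    rw [← ht, ← hu, ← Set.sep_or]
    refine (Set.sep_eq_self_iff_mem_true.mpr fun l hl => ?_).symm
    by_cases hlt : ∀ x ∈ l, a < x
    · exact .inl hlt
    obtain ⟨x, hx, hxa⟩ := not_forall₂.mp hlt
    exact .inr (le_antisymm (not_lt.mp hxa) (hge l hl x hx) ▸ hx)
  have hdisj : Disjoint (f '' t) (g '' u) := by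
    rw [← ht, ← hu, Set.disjoint_left]
    rintro l ⟨-, hlt⟩ ⟨-, hmem⟩
    exact (hlt a hmem).false
  rw [hs]
  exact ⟨(Equiv.Set.union hdisj).trans
    ((Equiv.Set.image f t hf).symm.sumCongr (Equiv.Set.image g u hg).symm)⟩

lemma distinctPartitions_sep_forall_lt {a : ℕ} (ha : 0 < a) (d n : ℕ) :
    {l ∈ distinctPartitions d a n | ∀ x ∈ l, a < x} =
      List.map (· + 1) '' distinctPartitions d a (n - 1) := by
  ext l
  constructor
  · rintro ⟨⟨⟨hne, hs, hpos⟩, hper, hdd, -⟩, hlt⟩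
    obtain ⟨l, rfl⟩ := List.exists_eq_map_add hpos
    have hne : l ≠ [] := by simpa using hne
    simp only [List.pairwise_map, List.forall_mem_map, dDistinct_map_add,
      perimeter_map_add hne] at hs hper hdd hlt
    refine ⟨l, ⟨⟨hne, by simpa using hs, fun x hx => ?_⟩, by omega, hdd, fun x hx => ?_⟩, rfl⟩
    all_goals have := hlt x hx; omega
  · rintro ⟨l, ⟨hl, hper, hdd, hge⟩, rfl⟩
    have := hl.perimeter_pos
    obtain ⟨hne, hs, -⟩ := hl
    refine ⟨⟨⟨by simpa using hne, by simpa [List.pairwise_map] using hs, by simp⟩, ?_, ?_, ?_⟩, ?_⟩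
    · rw [perimeter_map_add hne]; omega
    · rwa [dDistinct_map_add]
    all_goals simp only [List.forall_mem_map]; intro x hx; have := hge x hx; omega

lemma distinctPartitions_sep_mem {a n : ℕ} (ha : 0 < a) (hn : a < n) (d : ℕ) :
    {l ∈ distinctPartitions d a n | a ∈ l} =
      (fun l => l.map (· + d) ++ [a]) '' distinctPartitions d a (n - (d + 1)) := by
  ext l
  constructor
  · rintro ⟨⟨⟨-, hs, -⟩, hper, hdd, hge⟩, hmem⟩
    obtain ⟨l, rfl⟩ := List.exists_eq_append_singleton hs hge hmem
    obtain ⟨hdd, hgt⟩ := dDistinct_append_singleton.mp hdd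
    obtain ⟨l, rfl⟩ := List.exists_eq_map_add fun x hx => (Nat.le_add_left d a).trans (hgt x hx)
    have hne : l ≠ [] := by
      rintro rfl
      simp [perimeter] at hper
      omega
    rw [perimeter_append_singleton (by simpa using hne), perimeter_map_add hne] at hper
    simp only [List.pairwise_append, List.pairwise_map, List.forall_mem_map,
      dDistinct_map_add] at hs hdd hgt
    refine ⟨l, ⟨⟨hne, by simpa using hs.1, fun x hx => ?_⟩, by omega, hdd, fun x hx => ?_⟩, rfl⟩
    all_goals have := hgt x hx; omega
  · rintro ⟨l, ⟨hl, hper, hdd, hge⟩, rfl⟩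
    have := hl.perimeter_pos
    obtain ⟨hne, hs, hpos⟩ := hl
    refine ⟨⟨⟨by simp, ?_, ?_⟩, ?_, ?_, ?_⟩, by simp⟩
    · simp only [List.pairwise_append, List.pairwise_map, List.forall_mem_map]
      refine ⟨by simpa using hs, by simp, fun x hx b hb => ?_⟩
      have := hge x hx
      simp only [List.mem_singleton] at hb
      omega
    · simp only [List.mem_append, List.mem_map, List.mem_singleton]
      rintro x (⟨y, hy, rfl⟩ | rfl)
      · have := hpos y hy; omega
      · exact ha
    · rw [perimeter_append_singleton (by simpa using hne), perimeter_map_add hne]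
      omega
    · rw [dDistinct_append_singleton, dDistinct_map_add]
      exact ⟨hdd, by simpa using hge⟩
    · simp only [List.mem_append, List.mem_map, List.mem_singleton]
      rintro x (⟨y, hy, rfl⟩ | rfl)
      · have := hge y hy; omega
      · rfl

lemma congrPartitions_sep_forall_lt {d a : ℕ} (ha : 0 < a) (had : a ≤ d + 1) (n : ℕ) :
    {l ∈ congrPartitions d a n | ∀ x ∈ l, a < x} =
      List.map (· + (d + 1)) '' congrPartitions d a (n - (d + 1)) := by
  ext l
  constructor
  · rintro ⟨⟨⟨hne, hs, -⟩, hper, hmod⟩, hlt⟩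
    have hge : ∀ x ∈ l, a + (d + 1) ≤ x := fun x hx =>
      Nat.add_le_of_mod_eq_mod (hlt x hx) (hmod x hx)
    obtain ⟨l, rfl⟩ := List.exists_eq_map_add fun x hx => (Nat.le_add_left _ a).trans (hge x hx)
    have hne : l ≠ [] := by simpa using hne
    rw [perimeter_map_add hne] at hper
    simp only [List.pairwise_map, List.forall_mem_map, Nat.add_mod_right] at hs hmod hge
    refine ⟨l, ⟨⟨hne, by simpa using hs, fun x hx => ?_⟩, by omega, hmod⟩, rfl⟩
    have := hge x hx
    omega
  · rintro ⟨l, ⟨hl, hper, hmod⟩, rfl⟩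
    have := hl.perimeter_pos
    obtain ⟨hne, hs, hpos⟩ := hl
    refine ⟨⟨⟨by simpa using hne, by simpa [List.pairwise_map] using hs, by simp⟩, ?_, ?_⟩, ?_⟩
    · rw [perimeter_map_add hne]; omega
    · simpa using hmod
    · simp only [List.forall_mem_map]
      intro x hx
      have := hpos x hx
      omega

lemma congrPartitions_sep_mem {d a n : ℕ} (ha : 0 < a) (had : a ≤ d + 1) (hn : a < n) :
    {l ∈ congrPartitions d a n | a ∈ l} = (· ++ [a]) '' congrPartitions d a (n - 1) := by
  ext l
  constructor
  · rintro ⟨⟨⟨-, hs, hpos⟩, hper, hmod⟩, hmem⟩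
    have hge : ∀ x ∈ l, a ≤ x := fun x hx => Nat.le_of_mod_eq_mod (hpos x hx) had (hmod x hx)
    obtain ⟨l, rfl⟩ := List.exists_eq_append_singleton hs hge hmem
    have hne : l ≠ [] := by
      rintro rfl
      simp [perimeter] at hper
      omega
    rw [perimeter_append_singleton hne] at hper
    simp only [List.pairwise_append, List.forall_mem_append] at hs hpos hmod
    exact ⟨l, ⟨⟨hne, hs.1, hpos.1⟩, by omega, hmod.1⟩, rfl⟩
  · rintro ⟨l, ⟨hl, hper, hmod⟩, rfl⟩
    have := hl.perimeter_pos
    obtain ⟨hne, hs, hpos⟩ := hl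
    have hge : ∀ x ∈ l, a ≤ x := fun x hx => Nat.le_of_mod_eq_mod (hpos x hx) had (hmod x hx)
    refine ⟨⟨⟨by simp, ?_, ?_⟩, ?_, ?_⟩, by simp⟩
    · simpa [List.pairwise_append] using ⟨hs, hge⟩
    · rw [List.forall_mem_append, List.forall_mem_singleton]
      exact ⟨hpos, ha⟩
    · rw [perimeter_append_singleton hne]; omega
    · show ∀ x ∈ l ++ [a], _
      rw [List.forall_mem_append, List.forall_mem_singleton]
      exact ⟨hmod, rfl⟩

lemma nonempty_equiv_distinctPartitions_congrPartitions {d a : ℕ} (ha : 0 < a) (had : a ≤ d + 1)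
    (n : ℕ) : Nonempty (distinctPartitions d a n ≃ congrPartitions d a n) := by
  induction n using Nat.strong_induction_on with | _ n ih
  rcases le_or_gt n a with hn | hn
  · have hL : distinctPartitions d a n = {l | l = [a] ∧ n = a} :=
      perimeterPartitions_eq_of_le ha (fun _ _ hl => hl.2) ⟨List.isChain_singleton a, by simp⟩ hn
    have hR : congrPartitions d a n = {l | l = [a] ∧ n = a} :=
      perimeterPartitions_eq_of_le ha
        (fun _ hl hmod x hx => Nat.le_of_mod_eq_mod (hl.2.2 x hx) had (hmod x hx)) (by simp) hn
    exact ⟨Equiv.setCongr (hL.trans hR.symm)⟩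
  obtain ⟨e₁⟩ := ih (n - 1) (by omega)
  obtain ⟨e₂⟩ := ih (n - (d + 1)) (by omega)
  obtain ⟨eL⟩ := nonempty_equiv_sum_of_sep (List.map_injective_iff.mpr (add_left_injective 1))
    ((List.append_left_injective [a]).comp (List.map_injective_iff.mpr (add_left_injective d)))
    (fun l hl => hl.2.2.2) (distinctPartitions_sep_forall_lt ha d n)
    (distinctPartitions_sep_mem ha hn d)
  obtain ⟨eR⟩ := nonempty_equiv_sum_of_sep
    (List.map_injective_iff.mpr (add_left_injective (d + 1))) (List.append_left_injective [a])
    (fun l hl x hx => Nat.le_of_mod_eq_mod (hl.1.2.2 x hx) had (hl.2.2 x hx))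
    (congrPartitions_sep_forall_lt ha had n) (congrPartitions_sep_mem ha had hn)
  exact ⟨eL.trans ((e₁.sumCongr e₂).trans ((Equiv.sumComm _ _).trans eR.symm))⟩

theorem stmt0_general (d a n : ℕ) (ha : 0 < a) (had : a ≤ d + 1) :
    Nat.card {l : List ℕ // IsPartition l ∧ perimeter l = n ∧ DDistinct d l ∧ ∀ x ∈ l, a ≤ x}
      = Nat.card {l : List ℕ // IsPartition l ∧ perimeter l = n ∧
          ∀ x ∈ l, x % (d + 1) = a % (d + 1)} :=
  Nat.card_congr (nonempty_equiv_distinctPartitions_congrPartitions ha had n).some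

theorem stmt0 (d a n : ℕ) (hd : 0 < d) (ha : 0 < a) (hn : 0 < n) (had : a ≤ d + 1) :
    Nat.card {l : List ℕ // IsPartition l ∧ perimeter l = n ∧ DDistinct d l ∧ ∀ x ∈ l, a ≤ x}
      = Nat.card {l : List ℕ // IsPartition l ∧ perimeter l = n ∧
          ∀ x ∈ l, x % (d + 1) = a % (d + 1)} :=
  stmt0_general d a n ha had
end

section
/- The number of partitions with perimeter n into distinct parts equals the number of partitions with perimeter n into odd parts. -/
/-!
Both families satisfy the Fibonacci recursion in the perimeter. A distinct partition of
perimeter `n + 2` comes either from one of perimeter `n + 1` by raising its largest part by one,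
or, when its two largest parts are consecutive, from one of perimeter `n` by adding a new largest
part one above the old one. An odd partition of perimeter `n + 2` comes either from one of
perimeter `n + 1` by repeating its largest part, or from one of perimeter `n` by raising its
largest part by two. The two families coincide for perimeters `0` and `1`, so the bijections can
be assembled along the recursion.
-/

open Set Function

theorem nonempty_equiv_of_sum_recurrence {α β : ℕ → Type*}
    (h₀ : Nonempty (α 0 ≃ β 0)) (h₁ : Nonempty (α 1 ≃ β 1))
    (hα : ∀ n, Nonempty (α (n + 2) ≃ α (n + 1) ⊕ α n))
    (hβ : ∀ n, Nonempty (β (n + 2) ≃ β (n + 1) ⊕ β n)) : ∀ n, Nonempty (α n ≃ β n)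
  | 0 => h₀
  | 1 => h₁
  | n + 2 => by
    obtain ⟨e₁⟩ := nonempty_equiv_of_sum_recurrence h₀ h₁ hα hβ (n + 1)
    obtain ⟨e₀⟩ := nonempty_equiv_of_sum_recurrence h₀ h₁ hα hβ n
    obtain ⟨a⟩ := hα n
    obtain ⟨b⟩ := hβ n
    exact ⟨a.trans ((e₁.sumCongr e₀).trans b.symm)⟩

theorem Set.nonempty_equiv_sum_of_eq_image_union {α β γ : Type*} {S : Set β} {T : Set α}
    {U : Set γ} {f : α → β} {g : γ → β} (hS : S = f '' T ∪ g '' U) (hf : InjOn f T)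
    (hg : InjOn g U) (hfg : Disjoint (f '' T) (g '' U)) : Nonempty (S ≃ T ⊕ U) := by
  classical
  exact ⟨(Equiv.setCongr hS).trans <| (Equiv.Set.union hfg).trans <|
    (Equiv.Set.imageOfInjOn f T hf).symm.sumCongr (Equiv.Set.imageOfInjOn g U hg).symm⟩

theorem List.modifyHead_injective {α : Type*} {f : α → α} (hf : Injective f) :
    Injective (modifyHead f) := by
  rintro (_ | ⟨a, s⟩) (_ | ⟨b, t⟩) h <;> simp_all [hf.eq_iff]

theorem List.injective_cons_self {α : Type*} (f : List α → α) : Injective fun l => f l :: l :=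
  fun _ _ h => (List.cons.inj h).2

theorem perimeter_cons_s1 (a : ℕ) (t : List ℕ) : perimeter (a :: t) = a + t.length := by
  simp [perimeter]

def distinctPartsOfPerimeter (n : ℕ) : Set (List ℕ) :=
  {l | IsPartition l ∧ perimeter l = n ∧ l.Nodup}

def oddPartsOfPerimeter (n : ℕ) : Set (List ℕ) :=
  {l | IsPartition l ∧ perimeter l = n ∧ ∀ x ∈ l, Odd x}

theorem nil_notMem_distinctPartsOfPerimeter (n : ℕ) : [] ∉ distinctPartsOfPerimeter n :=
  fun h => h.1.1 rfl

theorem nil_notMem_oddPartsOfPerimeter (n : ℕ) : [] ∉ oddPartsOfPerimeter n :=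
  fun h => h.1.1 rfl

theorem cons_mem_distinctPartsOfPerimeter {a n : ℕ} {t : List ℕ} :
    a :: t ∈ distinctPartsOfPerimeter n ↔
      (a :: t).IsChain (· > ·) ∧ (∀ x ∈ a :: t, 0 < x) ∧ a + t.length = n := by
  simp only [distinctPartsOfPerimeter, IsPartition, mem_ofPred_eq, perimeter_cons_s1,
    ← List.sortedGE_iff_pairwise, ← List.sortedGT_iff_isChain,
    List.sortedGT_iff_nodup_and_sortedGE]
  grind

theorem cons_mem_oddPartsOfPerimeter {a n : ℕ} {t : List ℕ} :
    a :: t ∈ oddPartsOfPerimeter n ↔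
      (a :: t).IsChain (· ≥ ·) ∧ (∀ x ∈ a :: t, Odd x) ∧ a + t.length = n := by
  simp only [oddPartsOfPerimeter, IsPartition, mem_ofPred_eq, perimeter_cons_s1,
    ← List.isChain_iff_pairwise]
  grind [Odd.pos]

theorem distinctPartsOfPerimeter_eq_oddPartsOfPerimeter_of_le_one {n : ℕ} (hn : n ≤ 1) :
    distinctPartsOfPerimeter n = oddPartsOfPerimeter n := by
  ext (_ | ⟨a, t⟩)
  · simp [nil_notMem_distinctPartsOfPerimeter, nil_notMem_oddPartsOfPerimeter]
  · rw [cons_mem_distinctPartsOfPerimeter, cons_mem_oddPartsOfPerimeter]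
    constructor
    · rintro ⟨-, hpos, rfl⟩
      have := hpos a List.mem_cons_self
      obtain ⟨rfl, rfl⟩ : a = 1 ∧ t = [] :=
        ⟨by omega, List.eq_nil_of_length_eq_zero (by omega)⟩
      simp
    · rintro ⟨-, hodd, rfl⟩
      have := (hodd a List.mem_cons_self).pos
      obtain ⟨rfl, rfl⟩ : a = 1 ∧ t = [] :=
        ⟨by omega, List.eq_nil_of_length_eq_zero (by omega)⟩
      simp

theorem distinctPartsOfPerimeter_add_two (n : ℕ) :
    distinctPartsOfPerimeter (n + 2) =
      List.modifyHead (· + 1) '' distinctPartsOfPerimeter (n + 1) ∪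
        (fun l => (l.headI + 1) :: l) '' distinctPartsOfPerimeter n := by
  refine Subset.antisymm ?_ (union_subset ?_ ?_)
  · rintro (_ | ⟨a, _ | ⟨b, t⟩⟩) h
    · exact absurd h (nil_notMem_distinctPartsOfPerimeter _)
    · refine .inl ⟨[n + 1], ?_, ?_⟩ <;> simp_all [cons_mem_distinctPartsOfPerimeter]
    · simp only [cons_mem_distinctPartsOfPerimeter, List.isChain_cons_cons, List.forall_mem_cons,
        List.length_cons] at h
      by_cases hab : a = b + 1
      · refine .inr ⟨b :: t, ?_, by simp [hab]⟩
        simp only [cons_mem_distinctPartsOfPerimeter]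
        grind
      · refine .inl ⟨(a - 1) :: b :: t, ?_, by simp; omega⟩
        simp only [cons_mem_distinctPartsOfPerimeter, List.isChain_cons_cons, List.forall_mem_cons,
          List.length_cons]
        grind
  · rintro _ ⟨_ | ⟨a, t⟩, h, rfl⟩
    · exact absurd h (nil_notMem_distinctPartsOfPerimeter _)
    · simp only [cons_mem_distinctPartsOfPerimeter, List.forall_mem_cons,
        List.modifyHead_cons] at h ⊢
      exact ⟨h.1.imp_head fun hz => by omega, ⟨by omega, h.2.1.2⟩, by omega⟩
  · rintro _ ⟨_ | ⟨a, t⟩, h, rfl⟩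
    · exact absurd h (nil_notMem_distinctPartsOfPerimeter _)
    · simp only [cons_mem_distinctPartsOfPerimeter, List.isChain_cons_cons, List.forall_mem_cons,
        List.headI_cons, List.length_cons] at h ⊢
      grind

theorem disjoint_distinctPartsOfPerimeter_image (n : ℕ) :
    Disjoint (List.modifyHead (· + 1) '' distinctPartsOfPerimeter (n + 1))
      ((fun l => (l.headI + 1) :: l) '' distinctPartsOfPerimeter n) := by
  rw [Set.disjoint_left]
  rintro _ ⟨_ | ⟨a, t⟩, h, rfl⟩ ⟨_ | ⟨b, s⟩, hs, hst⟩
  · exact nil_notMem_distinctPartsOfPerimeter _ h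
  · exact nil_notMem_distinctPartsOfPerimeter _ h
  · exact nil_notMem_distinctPartsOfPerimeter _ hs
  · simp only [List.headI_cons, List.modifyHead_cons, List.cons.injEq] at hst
    obtain ⟨hab, rfl⟩ := hst
    simp only [cons_mem_distinctPartsOfPerimeter, List.isChain_cons_cons] at h
    omega

theorem oddPartsOfPerimeter_add_two (n : ℕ) :
    oddPartsOfPerimeter (n + 2) = (fun l => l.headI :: l) '' oddPartsOfPerimeter (n + 1) ∪
      List.modifyHead (· + 2) '' oddPartsOfPerimeter n := by
  refine Subset.antisymm ?_ (union_subset ?_ ?_)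
  · rintro (_ | ⟨a, _ | ⟨b, t⟩⟩) h
    · exact absurd h (nil_notMem_oddPartsOfPerimeter _)
    · simp only [cons_mem_oddPartsOfPerimeter, List.forall_mem_cons, List.length_nil] at h
      refine .inr ⟨[n], ?_, by simp; omega⟩
      simp only [cons_mem_oddPartsOfPerimeter, List.forall_mem_cons]
      grind
    · simp only [cons_mem_oddPartsOfPerimeter, List.isChain_cons_cons, List.forall_mem_cons,
        List.length_cons] at h
      by_cases hab : a = b
      · subst hab
        refine .inl ⟨a :: t, ?_, rfl⟩
        simp only [cons_mem_oddPartsOfPerimeter, List.forall_mem_cons]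
        grind
      · have hab : b + 2 ≤ a := by grind
        refine .inr ⟨(a - 2) :: b :: t, ?_, by simp; omega⟩
        simp only [cons_mem_oddPartsOfPerimeter, List.isChain_cons_cons, List.forall_mem_cons,
          List.length_cons]
        grind
  · rintro _ ⟨_ | ⟨a, t⟩, h, rfl⟩
    · exact absurd h (nil_notMem_oddPartsOfPerimeter _)
    · simp only [cons_mem_oddPartsOfPerimeter, List.isChain_cons_cons, List.forall_mem_cons,
        List.headI_cons, List.length_cons] at h ⊢
      grind
  · rintro _ ⟨_ | ⟨a, t⟩, h, rfl⟩
    · exact absurd h (nil_notMem_oddPartsOfPerimeter _)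
    · simp only [cons_mem_oddPartsOfPerimeter, List.forall_mem_cons,
        List.modifyHead_cons] at h ⊢
      exact ⟨h.1.imp_head fun hz => by omega, ⟨by grind, h.2.1.2⟩, by omega⟩

theorem disjoint_oddPartsOfPerimeter_image (n : ℕ) :
    Disjoint ((fun l => l.headI :: l) '' oddPartsOfPerimeter (n + 1))
      (List.modifyHead (· + 2) '' oddPartsOfPerimeter n) := by
  rw [Set.disjoint_left]
  rintro _ ⟨_ | ⟨a, t⟩, h, rfl⟩ ⟨_ | ⟨b, s⟩, hs, hst⟩
  · exact nil_notMem_oddPartsOfPerimeter _ h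
  · exact nil_notMem_oddPartsOfPerimeter _ h
  · exact nil_notMem_oddPartsOfPerimeter _ hs
  · simp only [List.headI_cons, List.modifyHead_cons, List.cons.injEq] at hst
    obtain ⟨rfl, rfl⟩ := hst
    simp only [cons_mem_oddPartsOfPerimeter, List.isChain_cons_cons] at hs
    omega

theorem stmt1_general (n : ℕ) :
    Nat.card {l : List ℕ // IsPartition l ∧ perimeter l = n ∧ l.Nodup}
      = Nat.card {l : List ℕ // IsPartition l ∧ perimeter l = n ∧ ∀ x ∈ l, Odd x} := by
  refine Nat.card_congr (nonempty_equiv_of_sum_recurrence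
    (α := fun n => distinctPartsOfPerimeter n) (β := fun n => oddPartsOfPerimeter n)
    ?_ ?_ ?_ ?_ n).some
  · exact ⟨Equiv.setCongr
      (distinctPartsOfPerimeter_eq_oddPartsOfPerimeter_of_le_one zero_le_one)⟩
  · exact ⟨Equiv.setCongr (distinctPartsOfPerimeter_eq_oddPartsOfPerimeter_of_le_one le_rfl)⟩
  · exact fun n => Set.nonempty_equiv_sum_of_eq_image_union (distinctPartsOfPerimeter_add_two n)
      (List.modifyHead_injective (add_left_injective 1)).injOn
      (List.injective_cons_self _).injOn (disjoint_distinctPartsOfPerimeter_image n)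
  · exact fun n => Set.nonempty_equiv_sum_of_eq_image_union (oddPartsOfPerimeter_add_two n)
      (List.injective_cons_self _).injOn
      (List.modifyHead_injective (add_left_injective 2)).injOn
      (disjoint_oddPartsOfPerimeter_image n)

theorem stmt1 (n : ℕ) (hn : 0 < n) :
    Nat.card {l : List ℕ // IsPartition l ∧ perimeter l = n ∧ l.Nodup}
      = Nat.card {l : List ℕ // IsPartition l ∧ perimeter l = n ∧ ∀ x ∈ l, Odd x} :=
  stmt1_general n
end

section
/- For positive integers n and k, the number of partitions with perimeter n into parts congruent to 1 modulo 2 (odd parts) with largest part exactly 2k-1 equals the binomial coefficient C(n-k, k-1). -/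
section AntitoneLists

variable {α β : Type*} [LinearOrder α] [LinearOrder β]

def antitoneListEquivSym (r : ℕ) :
    {u : List β // u.Pairwise (· ≥ ·) ∧ u.length = r} ≃ Sym β r where
  toFun u := ⟨u.1, u.2.2⟩
  invFun s := ⟨(s : Multiset β).sort (· ≥ ·), Multiset.pairwise_sort _ _, by simp⟩
  left_inv u := Subtype.ext (List.mergeSort_eq_self _ u.2.1)
  right_inv s := Sym.ext (Multiset.sort_eq _ _)

theorem natCard_antitoneList_mem_range (f : β ↪o α) (r : ℕ) :
    Nat.card {t : List α // t.Pairwise (· ≥ ·) ∧ t.length = r ∧ ∀ x ∈ t, x ∈ Set.range f} =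
      (Nat.card β).multichoose r := by
  rw [← Sym.natCard_sym_eq_multichoose, ← Nat.card_congr (antitoneListEquivSym r)]
  have map_pairwise_ge (u : List β) : (u.map f).Pairwise (· ≥ ·) ↔ u.Pairwise (· ≥ ·) := by
    simp only [List.pairwise_map, ge_iff_le, f.le_iff_le]
  let mapList (u : {u : List β // u.Pairwise (· ≥ ·) ∧ u.length = r}) :
      {t : List α // t.Pairwise (· ≥ ·) ∧ t.length = r ∧ ∀ x ∈ t, x ∈ Set.range f} :=
    ⟨u.1.map f, (map_pairwise_ge _).2 u.2.1, by simp [u.2.2], by simp⟩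
  refine (Nat.card_eq_of_bijective mapList ⟨?_, ?_⟩).symm
  · intro u v huv
    exact Subtype.ext (List.map_injective_iff.2 f.injective (congrArg Subtype.val huv))
  · rintro ⟨t, ht_ge, ht_len, ht_range⟩
    obtain ⟨u, rfl⟩ : t ∈ Set.range (List.map f) := by
      rw [Set.range_list_map]; exact ht_range
    exact ⟨⟨u, (map_pairwise_ge u).1 ht_ge, by simpa using ht_len⟩, rfl⟩

end AntitoneLists

theorem IsPartition.headI_le_perimeter {l : List ℕ} (hl : IsPartition l) :
    l.headI ≤ perimeter l := by
  have := List.length_pos_iff.2 hl.1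
  unfold perimeter; omega

theorem isPartition_cons_perimeter_iff {a : ℕ} {S : Set ℕ} (ha : a ∈ S) (hS : 0 ∉ S) (r : ℕ)
    (t : List ℕ) :
    (IsPartition (a :: t) ∧ perimeter (a :: t) = a + r ∧ ∀ x ∈ a :: t, x ∈ S) ↔
      t.Pairwise (· ≥ ·) ∧ t.length = r ∧ ∀ x ∈ t, x ∈ S ∩ Set.Iic a := by
  have hpos : ∀ x ∈ S, 0 < x := fun x hx => Nat.pos_of_ne_zero (by rintro rfl; exact hS hx)
  simp only [IsPartition, perimeter, List.pairwise_cons, List.forall_mem_cons, List.headI_cons,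
    List.length_cons, Set.mem_inter_iff, Set.mem_Iic]
  constructor
  · rintro ⟨⟨-, ⟨hle, hsorted⟩, -⟩, hper, -, hmem⟩
    exact ⟨hsorted, by omega, fun x hx => ⟨hmem x hx, hle x hx⟩⟩
  · rintro ⟨hsorted, rfl, hmem⟩
    exact ⟨⟨List.cons_ne_nil _ _, ⟨fun x hx => (hmem x hx).2, hsorted⟩, hpos a ha,
      fun x hx => hpos x (hmem x hx).1⟩, by omega, ha, fun x hx => (hmem x hx).1⟩

def partitionEquivTail {a : ℕ} {S : Set ℕ} (ha : a ∈ S) (hS : 0 ∉ S) (r : ℕ) :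
    {l : List ℕ // IsPartition l ∧ perimeter l = a + r ∧ (∀ x ∈ l, x ∈ S) ∧ l.headI = a} ≃
      {t : List ℕ // t.Pairwise (· ≥ ·) ∧ t.length = r ∧ ∀ x ∈ t, x ∈ S ∩ Set.Iic a} where
  toFun l := ⟨l.1.tail, by
    obtain ⟨l, hpart, hper, hmem, hhead⟩ := l
    obtain ⟨b, t, rfl⟩ := List.exists_cons_of_ne_nil hpart.1
    obtain rfl : b = a := hhead
    exact (isPartition_cons_perimeter_iff ha hS r t).1 ⟨hpart, hper, hmem⟩⟩
  invFun t := ⟨a :: t.1, by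
    obtain ⟨hpart, hper, hmem⟩ := (isPartition_cons_perimeter_iff ha hS r t.1).2 t.2
    exact ⟨hpart, hper, hmem, rfl⟩⟩
  left_inv := by
    rintro ⟨l, hpart, -, -, hhead⟩
    obtain ⟨b, t, rfl⟩ := List.exists_cons_of_ne_nil hpart.1
    obtain rfl : b = a := hhead
    rfl
  right_inv _ := rfl

def oddEmbedding (k : ℕ) : Fin k ↪o ℕ :=
  OrderEmbedding.ofStrictMono (fun i => 2 * i + 1) fun i j h => by simp only; omega

theorem oddEmbedding_apply (k : ℕ) (i : Fin k) : oddEmbedding k i = 2 * i + 1 := rfl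

theorem range_oddEmbedding (k : ℕ) :
    Set.range (oddEmbedding k) = {x | Odd x} ∩ Set.Iic (2 * k - 1) := by
  ext x
  simp only [oddEmbedding_apply, Set.mem_range, Set.mem_inter_iff,
    Set.mem_ofPred_eq, Set.mem_Iic]
  constructor
  · rintro ⟨i, rfl⟩
    exact ⟨odd_two_mul_add_one _, by omega⟩
  · rintro ⟨⟨i, rfl⟩, hle⟩
    exact ⟨⟨i, by omega⟩, rfl⟩

theorem stmt4 (n k : ℕ) (hn : 0 < n) (hk : 0 < k) :
    Nat.card {l : List ℕ // IsPartition l ∧ perimeter l = n ∧ (∀ x ∈ l, Odd x) ∧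
        l.headI = 2 * k - 1}
      = Nat.choose (n - k) (k - 1) := by
  rcases lt_or_ge n (2 * k - 1) with hlt | hle
  · rw [Nat.choose_eq_zero_of_lt (by omega), Nat.card_eq_zero]
    left
    constructor
    rintro ⟨l, hpart, hper, -, hhead⟩
    have := hpart.headI_le_perimeter
    omega
  obtain ⟨m, rfl⟩ := Nat.exists_eq_add_of_le hle
  have hodd : 2 * k - 1 ∈ {x | Odd x} := ⟨k - 1, by omega⟩
  have h0 : 0 ∉ {x | Odd x} := Nat.not_odd_zero
  refine (Nat.card_congr (partitionEquivTail hodd h0 m)).trans ?_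
  rw [← range_oddEmbedding, natCard_antitoneList_mem_range, Nat.card_eq_fintype_card,
    Fintype.card_fin, Nat.multichoose_eq,
    show 2 * k - 1 + m - k = (k - 1) + m by omega, show k + m - 1 = (k - 1) + m by omega,
    Nat.choose_symm_add]
end

section
/- For positive integers d, n, a with a < (d+3)/2, the number of partitions with perimeter n into d-distinct parts all ≥ a is at most the number of partitions with perimeter n into parts congruent to ±a modulo d+3. -/
/-!
Let `s₁ < s₂ < ⋯` enumerate the positive integers `≡ ±a (mod d + 3)`; since `2a < d + 3` they
are `a, (d+3) - a, (d+3) + a, …`, and since `d ≥ 1` they grow by at most `d + 1` on average: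
`sₖ ≤ a + (k - 1)(d + 1)`. Send a `d`-distinct partition `x₁ > ⋯ > xₖ ≥ a` to the partition with
largest part `sₖ`, followed by `xᵢ - xᵢ₊₁ - d` copies of `sₖ₊₁₋ᵢ` for `i < k` and enough copies
of `s₁ = a` to make the perimeter `x₁ + k - 1`. The largest part recovers `k`, and the
multiplicities then recover the gaps `xᵢ - xᵢ₊₁` and `xₖ`, so this map is injective.
-/

theorem replicate_append_inj {α : Type*} [DecidableEq α] {v : α} {m n : ℕ} {L L' : List α}
    (hL : v ∉ L) (hL' : v ∉ L') (h : List.replicate m v ++ L = List.replicate n v ++ L') :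
    m = n ∧ L = L' := by
  have hmn : m = n := by
    simpa [List.count_eq_zero_of_not_mem hL, List.count_eq_zero_of_not_mem hL'] using
      congrArg (List.count v) h
  subst hmn
  exact ⟨rfl, List.append_cancel_left h⟩

theorem le_headI_of_mem {α : Type*} [Inhabited α] [Preorder α] {l : List α}
    (hl : l.Pairwise (· ≥ ·)) {x : α} (hx : x ∈ l) : x ≤ l.headI := by
  cases l with
  | nil => simp at hx
  | cons y t => exact (List.mem_cons.mp hx).elim le_of_eq fun hx => List.rel_of_pairwise_cons hl hx

theorem finite_isPartition_perimeter_eq (n : ℕ) :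
    {l : List ℕ | IsPartition l ∧ perimeter l = n}.Finite := by
  refine ((List.finite_length_le (Fin (n + 1)) n).image (List.map Fin.val)).subset ?_
  rintro l ⟨⟨hne, hsort, hpos⟩, hper⟩
  unfold perimeter at hper
  have hlen : 1 ≤ l.length := List.length_pos_iff.mpr hne
  have hhead : 1 ≤ l.headI := by
    cases l with
    | nil => contradiction
    | cons y t => exact hpos y List.mem_cons_self
  have hle : ∀ x ∈ l, x < n + 1 := fun x hx => by
    have := le_headI_of_mem hsort hx
    omega
  lift l to List (Fin (n + 1)) using hle
  refine ⟨l, ?_, rfl⟩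
  rw [List.length_map] at hper hlen
  exact (show l.length ≤ n by omega)

namespace PerimeterInjection

variable {d a : ℕ}

/-- The sequence `sᵢ` above: when `0 < 2 * a < d + 3`, `pmSeq d a i` is the `i`-th positive
integer congruent to `±a` modulo `d + 3`, and `pmSeq d a 0 = 0`. -/
def pmSeq (d a i : ℕ) : ℕ :=
  if i % 2 = 1 then i / 2 * (d + 3) + a else i / 2 * (d + 3) - a

theorem pmSeq_two_mul (t : ℕ) : pmSeq d a (2 * t) = t * (d + 3) - a := by
  simp [pmSeq]

theorem pmSeq_two_mul_add_one (t : ℕ) : pmSeq d a (2 * t + 1) = t * (d + 3) + a := by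
  simp [pmSeq, Nat.add_mod, show (2 * t + 1) / 2 = t by omega]

theorem pmSeq_strictMono (ha : 0 < a) (h : 2 * a < d + 3) : StrictMono (pmSeq d a) := by
  refine strictMono_nat_of_lt_succ fun i => ?_
  obtain ⟨t, rfl | rfl⟩ := Nat.even_or_odd' i
  · rw [pmSeq_two_mul, pmSeq_two_mul_add_one]
    omega
  · rw [pmSeq_two_mul_add_one, show 2 * t + 1 + 1 = 2 * (t + 1) by ring, pmSeq_two_mul, add_mul]
    omega

theorem le_pmSeq (ha : 0 < a) (h : 2 * a < d + 3) {i : ℕ} (hi : 1 ≤ i) : a ≤ pmSeq d a i := by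
  simpa [pmSeq] using (pmSeq_strictMono ha h).monotone hi

theorem pmSeq_succ_le (hd : 0 < d) (ha : 0 < a) (k : ℕ) :
    pmSeq d a (k + 1) ≤ a + k * (d + 1) := by
  obtain ⟨t, rfl | rfl⟩ := Nat.even_or_odd' k
  · rw [pmSeq_two_mul_add_one]
    nlinarith
  · rw [show 2 * t + 1 + 1 = 2 * (t + 1) by ring, pmSeq_two_mul]
    have : (t + 1) * (d + 3) ≤ a + a + (2 * t + 1) * (d + 1) := by nlinarith
    omega

theorem pmSeq_mod (h : 2 * a < d + 3) {i : ℕ} (hi : 1 ≤ i) :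
    pmSeq d a i % (d + 3) = a % (d + 3) ∨ (pmSeq d a i + a) % (d + 3) = 0 := by
  obtain ⟨t, rfl | rfl⟩ := Nat.even_or_odd' i
  · have : a ≤ t * (d + 3) := by nlinarith
    simp [pmSeq_two_mul, Nat.sub_add_cancel this]
  · simp [pmSeq_two_mul_add_one]

variable (d a) in
def gaps : List ℕ → List ℕ
  | [] => []
  | [x] => List.replicate (x - a) (pmSeq d a 1)
  | x :: y :: t => List.replicate (x - y - d) (pmSeq d a (t.length + 2)) ++ gaps (y :: t)

theorem exists_eq_pmSeq_of_mem_gaps :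
    ∀ {l : List ℕ} {z : ℕ}, z ∈ gaps d a l → ∃ i, 1 ≤ i ∧ i ≤ l.length ∧ z = pmSeq d a i
  | [x], z, hz => ⟨1, le_rfl, le_rfl, List.eq_of_mem_replicate hz⟩
  | x :: y :: t, z, hz => by
    rcases List.mem_append.mp hz with hz | hz
    · exact ⟨t.length + 2, by omega, by simp, List.eq_of_mem_replicate hz⟩
    · obtain ⟨i, hi1, hil, rfl⟩ := exists_eq_pmSeq_of_mem_gaps hz
      exact ⟨i, hi1, by simp at hil ⊢; omega, rfl⟩

theorem le_of_mem_gaps (ha : 0 < a) (h : 2 * a < d + 3) {l : List ℕ} {z : ℕ}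
    (hz : z ∈ gaps d a l) : a ≤ z ∧ z ≤ pmSeq d a l.length := by
  obtain ⟨i, hi1, hil, rfl⟩ := exists_eq_pmSeq_of_mem_gaps hz
  exact ⟨le_pmSeq ha h hi1, (pmSeq_strictMono ha h).monotone hil⟩

theorem pmSeq_notMem_gaps (ha : 0 < a) (h : 2 * a < d + 3) {l : List ℕ} {k : ℕ}
    (hk : l.length < k) : pmSeq d a k ∉ gaps d a l := fun hk' => by
  obtain ⟨i, -, hil, hi⟩ := exists_eq_pmSeq_of_mem_gaps hk'
  exact absurd ((pmSeq_strictMono ha h).injective hi) (by omega)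

theorem pairwise_gaps (ha : 0 < a) (h : 2 * a < d + 3) :
    ∀ l : List ℕ, (gaps d a l).Pairwise (· ≥ ·)
  | [] => List.Pairwise.nil
  | [x] => List.pairwise_replicate.mpr (Or.inr le_rfl)
  | x :: y :: t => by
    refine List.pairwise_append.mpr ⟨List.pairwise_replicate.mpr (Or.inr le_rfl),
      pairwise_gaps ha h (y :: t), fun u hu v hv => ?_⟩
    rw [List.eq_of_mem_replicate hu]
    exact (le_of_mem_gaps ha h hv).2.trans ((pmSeq_strictMono ha h).monotone (by simp))

theorem length_gaps_add :
    ∀ {l : List ℕ}, l ≠ [] → DDistinct d l → (∀ x ∈ l, a ≤ x) →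
      (gaps d a l).length + a + (l.length - 1) * d = l.headI
  | [x], _, _, hl => by simpa [gaps] using Nat.sub_add_cancel (hl x (by simp))
  | x :: y :: t, _, hdd, hl => by
    have ih := length_gaps_add (l := y :: t) (by simp) hdd.tail (fun z hz => hl z (by simp [hz]))
    have hxy : y + d ≤ x := (List.isChain_cons_cons.mp hdd).1
    simp only [gaps, List.length_append, List.length_replicate, List.length_cons,
      List.headI] at ih ⊢
    rw [show t.length + 1 + 1 - 1 = t.length + 1 - 1 + 1 by omega, add_mul]
    omega

theorem gaps_inj (ha : 0 < a) (h : 2 * a < d + 3) :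
    ∀ {l l' : List ℕ}, DDistinct d l → DDistinct d l' → (∀ x ∈ l, a ≤ x) → (∀ x ∈ l', a ≤ x) →
      l.length = l'.length → gaps d a l = gaps d a l' → l = l'
  | [], [], _, _, _, _, _, _ => rfl
  | [x], [x'], _, _, hl, hl', _, hgaps => by
    have := congrArg List.length hgaps
    simp only [gaps, List.length_replicate] at this
    have := hl x (by simp); have := hl' x' (by simp)
    rw [show x = x' by omega]
  | x :: y :: t, x' :: y' :: t', hdd, hdd', hl, hl', hlen, hgaps => by
    have htt : t.length = t'.length := by simpa using hlen
    simp only [gaps, htt] at hgaps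
    obtain ⟨hgap, htail⟩ := replicate_append_inj (pmSeq_notMem_gaps ha h (by simp [htt]))
      (pmSeq_notMem_gaps ha h (by simp)) hgaps
    obtain ⟨rfl, rfl⟩ := List.cons.inj (gaps_inj ha h hdd.tail hdd'.tail
      (fun z hz => hl z (by simp [hz])) (fun z hz => hl' z (by simp [hz]))
      (by simp [htt]) htail)
    have := (List.isChain_cons_cons.mp hdd).1; have := (List.isChain_cons_cons.mp hdd').1
    rw [show x = x' by omega]
  | [], _ :: _, _, _, _, _, hlen, _ | _ :: _, [], _, _, _, _, hlen, _
  | [_], _ :: _ :: _, _, _, _, _, hlen, _ | _ :: _ :: _, [_], _, _, _, _, hlen, _ => by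
    simp at hlen

variable (d a) in
/-- The padding by `a + (k - 1) * (d + 1) - pmSeq d a k` parts `a` makes the perimeter equal to
`x₁ + k - 1`; by `pmSeq_succ_le` this subtraction does not truncate. -/
def pmPartition (l : List ℕ) : List ℕ :=
  pmSeq d a l.length ::
    (gaps d a l ++ List.replicate (a + (l.length - 1) * (d + 1) - pmSeq d a l.length) a)

theorem le_of_mem_pmPartition (ha : 0 < a) (h : 2 * a < d + 3) {l : List ℕ} (hl : l ≠ [])
    {z : ℕ} (hz : z ∈ pmPartition d a l) : a ≤ z ∧ z ≤ pmSeq d a l.length := by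
  have hlen : 1 ≤ l.length := List.length_pos_iff.mpr hl
  simp only [pmPartition, List.mem_cons, List.mem_append, List.mem_replicate] at hz
  rcases hz with rfl | hz | ⟨-, rfl⟩
  · exact ⟨le_pmSeq ha h hlen, le_rfl⟩
  · exact le_of_mem_gaps ha h hz
  · exact ⟨le_rfl, le_pmSeq ha h hlen⟩

theorem isPartition_pmPartition (ha : 0 < a) (h : 2 * a < d + 3) {l : List ℕ} (hl : l ≠ []) :
    IsPartition (pmPartition d a l) := by
  refine ⟨List.cons_ne_nil _ _, List.pairwise_cons.mpr ⟨fun z hz => ?_, ?_⟩, fun z hz =>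
    ha.trans_le (le_of_mem_pmPartition ha h hl hz).1⟩
  · exact (le_of_mem_pmPartition ha h hl (List.mem_cons_of_mem _ hz)).2
  · refine List.pairwise_append.mpr ⟨pairwise_gaps ha h l,
      List.pairwise_replicate.mpr (Or.inr le_rfl), fun u hu v hv => ?_⟩
    rw [List.eq_of_mem_replicate hv]
    exact (le_of_mem_gaps ha h hu).1

theorem perimeter_pmPartition (hd : 0 < d) (ha : 0 < a) {l : List ℕ} (hl : l ≠ [])
    (hdd : DDistinct d l) (hla : ∀ x ∈ l, a ≤ x) :
    perimeter (pmPartition d a l) = perimeter l := by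
  obtain ⟨k, hk⟩ : ∃ k, l.length = k + 1 := Nat.exists_eq_succ_of_ne_zero (by simpa using hl)
  have hgaps := length_gaps_add hl hdd hla
  have hpad := pmSeq_succ_le (d := d) hd ha k
  simp only [perimeter, pmPartition, List.headI, List.length_cons, List.length_append,
    List.length_replicate, hk, Nat.add_sub_cancel, mul_add_one] at hgaps hpad ⊢
  omega

theorem pmPartition_mod (h : 2 * a < d + 3) {l : List ℕ} (hl : l ≠ []) :
    ∀ x ∈ pmPartition d a l, x % (d + 3) = a % (d + 3) ∨ (x + a) % (d + 3) = 0 := by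
  intro x hx
  simp only [pmPartition, List.mem_cons, List.mem_append, List.mem_replicate] at hx
  rcases hx with rfl | hx | ⟨-, rfl⟩
  · exact pmSeq_mod h (List.length_pos_iff.mpr hl)
  · obtain ⟨i, hi, -, rfl⟩ := exists_eq_pmSeq_of_mem_gaps hx
    exact pmSeq_mod h hi
  · exact Or.inl rfl

theorem injOn_pmPartition (ha : 0 < a) (h : 2 * a < d + 3) :
    Set.InjOn (pmPartition d a) {l | DDistinct d l ∧ ∀ x ∈ l, a ≤ x} := by
  intro l ⟨hdd, hla⟩ l' ⟨hdd', hla'⟩ himg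
  obtain ⟨hhead, htail⟩ := List.cons.inj himg
  have hlen := (pmSeq_strictMono ha h).injective hhead
  rw [hlen] at htail
  exact gaps_inj ha h hdd hdd' hla hla' hlen (List.append_cancel_right htail)

theorem mapsTo_pmPartition (hd : 0 < d) (ha : 0 < a) (h : 2 * a < d + 3) (n : ℕ) :
    Set.MapsTo (pmPartition d a)
      {l | IsPartition l ∧ perimeter l = n ∧ DDistinct d l ∧ ∀ x ∈ l, a ≤ x}
      {l | IsPartition l ∧ perimeter l = n ∧
        ∀ x ∈ l, x % (d + 3) = a % (d + 3) ∨ (x + a) % (d + 3) = 0} :=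
  fun _ ⟨⟨hne, _⟩, hper, hdd, hla⟩ => ⟨isPartition_pmPartition ha h hne,
    (perimeter_pmPartition hd ha hne hdd hla).trans hper, pmPartition_mod h hne⟩

end PerimeterInjection

open PerimeterInjection in
theorem stmt8_general (d n a : ℕ) (hd : 0 < d) (ha : 0 < a) (h : 2 * a < d + 3) :
    Nat.card {l : List ℕ // IsPartition l ∧ perimeter l = n ∧ DDistinct d l ∧ ∀ x ∈ l, a ≤ x}
      ≤ Nat.card {l : List ℕ // IsPartition l ∧ perimeter l = n ∧
          ∀ x ∈ l, x % (d + 3) = a % (d + 3) ∨ (x + a) % (d + 3) = 0} := by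
  exact Set.ncard_le_ncard_of_injOn _ (mapsTo_pmPartition hd ha h n)
    ((injOn_pmPartition ha h).mono fun _ hl => hl.2.2)
    ((finite_isPartition_perimeter_eq n).subset fun _ hl => ⟨hl.1, hl.2.1⟩)

theorem stmt8 (d n a : ℕ) (hd : 0 < d) (hn : 0 < n) (ha : 0 < a) (h : 2 * a < d + 3) :
    Nat.card {l : List ℕ // IsPartition l ∧ perimeter l = n ∧ DDistinct d l ∧ ∀ x ∈ l, a ≤ x}
      ≤ Nat.card {l : List ℕ // IsPartition l ∧ perimeter l = n ∧
          ∀ x ∈ l, x % (d + 3) = a % (d + 3) ∨ (x + a) % (d + 3) = 0} :=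
  stmt8_general d n a hd ha h
end

section
/- Fix positive integers d, a, α, λ with a < (d+3)/2. The number of partitions with largest part exactly α, exactly λ parts, and all parts congruent to ±a modulo d+3 is nonzero if and only if α ≥ a and α ≡ ±a (mod d+3); when α ≡ a (mod d+3) it equals C(2(α-a)/(d+3) + λ - 1, λ - 1), and when α ≡ -a (mod d+3) it equals C(2(α+a)/(d+3) + λ - 2, λ - 1). -/
/-!
Listed increasingly, the positive integers congruent to `±a` modulo `m` (where `0 < 2a < m`) are
`a, m - a, m + a, 2m - a, 2m + a, …`, so `α` is the `N`-th term (from `0`) with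
`N = 2(α - a)/m` or `N = 2(α + a)/m - 1`. A partition with largest part `α` and `λ` parts is `α`
followed by an arbitrary multiset of `λ - 1` admissible parts `≤ α`; there are `N + 1` such
parts, so stars and bars counts these multisets as `C(N + λ - 1, λ - 1)`.
-/

open Finset

lemma Multiset.map_val_pmap_mk {α : Type*} {p : α → Prop} (s : Multiset α) (h : ∀ a ∈ s, p a) :
    (s.pmap Subtype.mk h).map Subtype.val = s := by
  simp [Multiset.map_pmap, Multiset.pmap_eq_map]

def restrictedPartitions (P : ℕ → Prop) (A n : ℕ) : Set (List ℕ) :=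
  {l | IsPartition l ∧ l.headI = A ∧ l.length = n ∧ ∀ x ∈ l, P x}

def admissibleParts (P : ℕ → Prop) [DecidablePred P] (A : ℕ) : Finset ℕ :=
  {x ∈ Icc 1 A | P x}

section RestrictedPartitions

variable {P : ℕ → Prop} {A k n x : ℕ} {l t : List ℕ}

lemma eq_cons_tail_of_mem_restrictedPartitions (hl : l ∈ restrictedPartitions P A n) :
    l = A :: l.tail := by
  obtain ⟨⟨hne, -⟩, rfl, -⟩ := hl
  cases l with
  | nil => exact absurd rfl hne
  | cons y t => rfl

lemma length_tail_of_mem_restrictedPartitions (hl : l ∈ restrictedPartitions P A n) :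
    l.tail.length = n - 1 := by
  rw [List.length_tail, hl.2.2.1]

variable [DecidablePred P]

lemma mem_admissibleParts_of_mem_tail (hl : l ∈ restrictedPartitions P A n) (hx : x ∈ l.tail) :
    x ∈ admissibleParts P A := by
  have hcons := eq_cons_tail_of_mem_restrictedPartitions hl
  obtain ⟨⟨-, hsort, hpos⟩, -, -, hP⟩ := hl
  rw [hcons] at hsort
  have hxl : x ∈ l := List.mem_of_mem_tail hx
  simp only [admissibleParts, mem_filter, mem_Icc]
  exact ⟨⟨hpos x hxl, List.rel_of_pairwise_cons hsort hx⟩, hP x hxl⟩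

lemma cons_mem_restrictedPartitions (hA : 0 < A) (hPA : P A) (hsort : t.Pairwise (· ≥ ·))
    (hlen : t.length = k) (ht : ∀ x ∈ t, x ∈ admissibleParts P A) :
    A :: t ∈ restrictedPartitions P A (k + 1) := by
  simp only [admissibleParts, mem_filter, mem_Icc] at ht
  refine ⟨⟨List.cons_ne_nil _ _, List.pairwise_cons.2 ⟨fun x hx => (ht x hx).1.2, hsort⟩, ?_⟩,
    rfl, by simp [hlen], ?_⟩
  · simpa only [List.forall_mem_cons] using ⟨hA, fun x hx => (ht x hx).1.1⟩
  · simpa only [List.forall_mem_cons] using ⟨hPA, fun x hx => (ht x hx).2⟩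

def restrictedPartitionsEquivSym (hA : 0 < A) (hPA : P A) (k : ℕ) :
    restrictedPartitions P A (k + 1) ≃ Sym (admissibleParts P A) k where
  toFun l := Sym.mk ((l.1.tail : Multiset ℕ).pmap Subtype.mk fun _ hx ↦
    mem_admissibleParts_of_mem_tail l.2 (Multiset.mem_coe.1 hx)) <| by
      rw [Multiset.card_pmap, Multiset.coe_card, length_tail_of_mem_restrictedPartitions l.2,
        Nat.add_sub_cancel]
  invFun σ := ⟨A :: Multiset.sort ((σ : Multiset (admissibleParts P A)).map Subtype.val) (· ≥ ·),
    cons_mem_restrictedPartitions hA hPA (Multiset.pairwise_sort _ _) (by simp) fun x hx => by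
      obtain ⟨y, -, rfl⟩ := Multiset.mem_map.1 ((Multiset.mem_sort _).1 hx)
      exact y.2⟩
  left_inv l := by
    obtain ⟨l, hl⟩ := l
    have hsort : Multiset.sort (l.tail : Multiset ℕ) (· ≥ ·) = l.tail :=
      List.mergeSort_eq_self _ (hl.1.2.1.sublist (List.tail_sublist l))
    apply Subtype.ext
    dsimp only
    rw [Sym.coe_mk, Multiset.map_val_pmap_mk, hsort, ← eq_cons_tail_of_mem_restrictedPartitions hl]
  right_inv σ := by
    apply Sym.coe_injective
    apply Multiset.map_injective Subtype.val_injective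
    dsimp only
    rw [Sym.coe_mk, Multiset.map_val_pmap_mk, List.tail_cons, Multiset.sort_eq]

theorem card_restrictedPartitions (hA : 0 < A) (hPA : P A) (k : ℕ) :
    Nat.card (restrictedPartitions P A (k + 1)) = (#(admissibleParts P A) + k - 1).choose k := by
  rw [Nat.card_congr (restrictedPartitionsEquivSym hA hPA k), Sym.natCard_sym_eq_choose,
    Nat.card_eq_finsetCard]

theorem card_restrictedPartitions_pos_iff :
    0 < Nat.card (restrictedPartitions P A (k + 1)) ↔ 0 < A ∧ P A := by
  constructor
  · intro hpos
    obtain ⟨⟨l, hl⟩⟩ := (Nat.card_pos_iff.1 hpos).1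
    have hAl : A ∈ l := by
      rw [eq_cons_tail_of_mem_restrictedPartitions hl]; exact List.mem_cons_self
    exact ⟨hl.1.2.2 A hAl, hl.2.2.2 A hAl⟩
  · rintro ⟨hA, hPA⟩
    have hAmem : A ∈ admissibleParts P A := by
      simp [admissibleParts, hPA, Nat.one_le_iff_ne_zero, hA.ne']
    rw [card_restrictedPartitions hA hPA]
    exact Nat.choose_pos (by have := card_pos.2 ⟨A, hAmem⟩; omega)

variable {f : ℕ → ℕ}

lemma admissibleParts_eq_image_range (hf : StrictMono f)
    (hrange : ∀ x, (∃ k, f k = x) ↔ 0 < x ∧ P x) (N : ℕ) :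
    admissibleParts P (f N) = (range (N + 1)).image f := by
  ext x
  simp only [admissibleParts, mem_filter, mem_Icc, mem_image, mem_range, Nat.lt_succ_iff]
  constructor
  · rintro ⟨⟨hx1, hxN⟩, hPx⟩
    obtain ⟨k, rfl⟩ := (hrange x).2 ⟨hx1, hPx⟩
    exact ⟨k, hf.le_iff_le.1 hxN, rfl⟩
  · rintro ⟨k, hk, rfl⟩
    have := (hrange (f k)).1 ⟨k, rfl⟩
    exact ⟨⟨this.1, hf.monotone hk⟩, this.2⟩

theorem card_restrictedPartitions_of_strictMono (hf : StrictMono f)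
    (hrange : ∀ x, (∃ k, f k = x) ↔ 0 < x ∧ P x) (N k : ℕ) :
    Nat.card (restrictedPartitions P (f N) (k + 1)) = (N + k).choose k := by
  obtain ⟨hpos, hP⟩ := (hrange (f N)).1 ⟨N, rfl⟩
  rw [card_restrictedPartitions hpos hP, admissibleParts_eq_image_range hf hrange,
    card_image_of_injective _ hf.injective, card_range, Nat.add_right_comm, Nat.add_sub_cancel]

end RestrictedPartitions

def plusMinusSeq (m a k : ℕ) : ℕ := k / 2 * m + if k % 2 = 0 then a else m - a

section PlusMinusSeq

variable {m a x : ℕ}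

@[simp] lemma plusMinusSeq_two_mul (j : ℕ) : plusMinusSeq m a (2 * j) = j * m + a := by
  simp [plusMinusSeq]

@[simp] lemma plusMinusSeq_two_mul_add_one (j : ℕ) :
    plusMinusSeq m a (2 * j + 1) = j * m + (m - a) := by
  simp [plusMinusSeq, Nat.mul_add_div]

lemma plusMinusSeq_strictMono (ha : 0 < a) (hm : 2 * a < m) : StrictMono (plusMinusSeq m a) := by
  refine strictMono_nat_of_lt_succ fun k => ?_
  obtain ⟨j, rfl | rfl⟩ := Nat.even_or_odd' k
  · simp only [plusMinusSeq_two_mul, plusMinusSeq_two_mul_add_one]; omega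
  · rw [show 2 * j + 1 + 1 = 2 * (j + 1) by ring, plusMinusSeq_two_mul_add_one,
      plusMinusSeq_two_mul, add_mul]
    omega

lemma plusMinusSeq_two_mul_sub_div (ham : a < m) (hx : x % m = a % m) :
    plusMinusSeq m a (2 * ((x - a) / m)) = x := by
  have hdiv := Nat.div_add_mod x m
  rw [hx, Nat.mod_eq_of_lt ham] at hdiv
  rw [plusMinusSeq_two_mul, show x - a = m * (x / m) by omega,
    Nat.mul_div_cancel_left _ (by omega)]
  rw [Nat.mul_comm]; omega

lemma plusMinusSeq_two_mul_add_div_sub_one (ham : a ≤ m) (hx : (x + a) % m = 0) (hpos : 0 < x) :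
    plusMinusSeq m a (2 * ((x + a) / m) - 1) = x := by
  have hdiv := Nat.div_add_mod (x + a) m
  rw [hx] at hdiv
  obtain ⟨q, hq⟩ : ∃ q, (x + a) / m = q + 1 :=
    Nat.exists_eq_add_one_of_ne_zero fun h0 => by rw [h0] at hdiv; omega
  rw [hq, show 2 * (q + 1) - 1 = 2 * q + 1 by omega, plusMinusSeq_two_mul_add_one]
  rw [hq, Nat.mul_add] at hdiv
  rw [Nat.mul_comm]; omega

lemma exists_plusMinusSeq_eq_iff (ha : 0 < a) (hm : 2 * a < m) :
    (∃ k, plusMinusSeq m a k = x) ↔ 0 < x ∧ (x % m = a % m ∨ (x + a) % m = 0) := by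
  constructor
  · rintro ⟨k, rfl⟩
    obtain ⟨j, rfl | rfl⟩ := Nat.even_or_odd' k
    · exact ⟨by simp [ha], Or.inl (by simp)⟩
    · refine ⟨by rw [plusMinusSeq_two_mul_add_one]; omega, Or.inr ?_⟩
      rw [plusMinusSeq_two_mul_add_one, add_assoc, Nat.sub_add_cancel (by omega)]
      simp
  · rintro ⟨hpos, hx | hx⟩
    · exact ⟨_, plusMinusSeq_two_mul_sub_div (by omega) hx⟩
    · exact ⟨_, plusMinusSeq_two_mul_add_div_sub_one (by omega) hx hpos⟩

end PlusMinusSeq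

theorem stmt10_general (d a α lam : ℕ) (ha : 0 < a) (hlam : 0 < lam)
    (h : 2 * a < d + 3) :
    (0 < Nat.card {l : List ℕ // IsPartition l ∧ l.headI = α ∧ l.length = lam ∧
        (∀ x ∈ l, x % (d + 3) = a % (d + 3) ∨ (x + a) % (d + 3) = 0)} ↔
      a ≤ α ∧ (α % (d + 3) = a % (d + 3) ∨ (α + a) % (d + 3) = 0)) ∧
    (a ≤ α → α % (d + 3) = a % (d + 3) →
      Nat.card {l : List ℕ // IsPartition l ∧ l.headI = α ∧ l.length = lam ∧
          (∀ x ∈ l, x % (d + 3) = a % (d + 3) ∨ (x + a) % (d + 3) = 0)}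
        = Nat.choose (2 * ((α - a) / (d + 3)) + lam - 1) (lam - 1)) ∧
    (a ≤ α → (α + a) % (d + 3) = 0 →
      Nat.card {l : List ℕ // IsPartition l ∧ l.headI = α ∧ l.length = lam ∧
          (∀ x ∈ l, x % (d + 3) = a % (d + 3) ∨ (x + a) % (d + 3) = 0)}
        = Nat.choose (2 * ((α + a) / (d + 3)) + lam - 2) (lam - 1)) := by
  obtain ⟨k, rfl⟩ := Nat.exists_eq_add_one_of_ne_zero hlam.ne'
  have hrange := fun x => exists_plusMinusSeq_eq_iff (x := x) ha h
  have hcount := card_restrictedPartitions_of_strictMono (plusMinusSeq_strictMono ha h) hrange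
  refine ⟨?_, fun _ hmod => ?_, fun hle hmod => ?_⟩
  · change 0 < Nat.card (restrictedPartitions _ α (k + 1)) ↔ _
    rw [card_restrictedPartitions_pos_iff]
    refine ⟨fun hαP => ⟨?_, hαP.2⟩, fun hαP => ⟨by omega, hαP.2⟩⟩
    obtain ⟨N, rfl⟩ := (hrange α).2 hαP
    simpa [plusMinusSeq] using (plusMinusSeq_strictMono ha h).monotone (Nat.zero_le N)
  · have := hcount (2 * ((α - a) / (d + 3))) k
    rw [plusMinusSeq_two_mul_sub_div (by omega) hmod] at this
    rw [Nat.add_sub_cancel, ← Nat.add_assoc, Nat.add_sub_cancel]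
    exact this
  · have hq : 0 < (α + a) / (d + 3) :=
      Nat.div_pos (Nat.le_of_dvd (by omega) (Nat.dvd_of_mod_eq_zero hmod)) (by omega)
    have := hcount (2 * ((α + a) / (d + 3)) - 1) k
    rw [plusMinusSeq_two_mul_add_div_sub_one (by omega) hmod (by omega)] at this
    rw [show 2 * ((α + a) / (d + 3)) + (k + 1) - 2 = 2 * ((α + a) / (d + 3)) - 1 + k by omega,
      Nat.add_sub_cancel]
    exact this

theorem stmt10 (d a α lam : ℕ) (hd : 0 < d) (ha : 0 < a) (hα : 0 < α) (hlam : 0 < lam)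
    (h : 2 * a < d + 3) :
    (0 < Nat.card {l : List ℕ // IsPartition l ∧ l.headI = α ∧ l.length = lam ∧
        (∀ x ∈ l, x % (d + 3) = a % (d + 3) ∨ (x + a) % (d + 3) = 0)} ↔
      a ≤ α ∧ (α % (d + 3) = a % (d + 3) ∨ (α + a) % (d + 3) = 0)) ∧
    (a ≤ α → α % (d + 3) = a % (d + 3) →
      Nat.card {l : List ℕ // IsPartition l ∧ l.headI = α ∧ l.length = lam ∧
          (∀ x ∈ l, x % (d + 3) = a % (d + 3) ∨ (x + a) % (d + 3) = 0)}
        = Nat.choose (2 * ((α - a) / (d + 3)) + lam - 1) (lam - 1)) ∧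
    (a ≤ α → (α + a) % (d + 3) = 0 →
      Nat.card {l : List ℕ // IsPartition l ∧ l.headI = α ∧ l.length = lam ∧
          (∀ x ∈ l, x % (d + 3) = a % (d + 3) ∨ (x + a) % (d + 3) = 0)}
        = Nat.choose (2 * ((α + a) / (d + 3)) + lam - 2) (lam - 1)) :=
  stmt10_general d a α lam ha hlam h
end

section
/- For positive integers d, a, n with a < (d+3)/2 and n ≥ a: (1) ⌊(1/2)·⌊(n-a)/(d+1)⌋⌋ ≤ ⌊(n-a)/(d+3)⌋, and (2) ⌊(1/2)·⌊(n-a)/(d+1) + 1⌋⌋ ≤ ⌊(n+a)/(d+3)⌋. -/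
theorem stmt16 (d a n : ℕ) (hd : 0 < d) (ha : 0 < a) (hn : 0 < n)
    (h : 2 * a < d + 3) (hna : a ≤ n) :
    (n - a) / (d + 1) / 2 ≤ (n - a) / (d + 3) ∧
    ((n - a) / (d + 1) + 1) / 2 ≤ (n + a) / (d + 3) := by
  constructor
  · rw [Nat.div_div_eq_div_mul]
    exact Nat.div_le_div_left (by omega) (by omega)
  · set q := (n - a) / (d + 1) with hq
    have h1 : q * (d + 1) ≤ n - a := Nat.div_mul_le_self _ _
    set t := (q + 1) / 2 with ht
    have h2 : 2 * t ≤ q + 1 := by omega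
    rw [Nat.le_div_iff_mul_le (by omega)]
    rcases Nat.eq_zero_or_pos t with h0 | h0
    · simp [h0]
    · obtain ⟨s, hs⟩ := Nat.exists_eq_add_of_le h0
      rw [hs] at h2 ⊢
      have h3 : s * 1 ≤ s * d := Nat.mul_le_mul_left s hd
      have h4 : n - a + a = n := Nat.sub_add_cancel hna
      have h5 : (2 * s + 1) * (d + 1) ≤ q * (d + 1) :=
        Nat.mul_le_mul_right (d + 1) (by omega)
      nlinarith [h1, h2, h3, h4, h5, ha]
end

section
/- For positive integers d, a, n with a ≤ d+1 and n ≥ a, the number of partitions with perimeter n into parts ≡ a (mod d+1) equals the sum over k from 0 to ⌊(n-a)/(d+1)⌋ of C(n - a - kd, n - a - kd - k). -/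
/-!
Since `0 < a ≤ d + 1`, the positive integers `≡ a (mod d + 1)` are exactly `a + j * (d + 1)`,
`j ≥ 0`. A partition of perimeter `n` into such parts with largest part `a + k * (d + 1)` has
`n - a - k * (d + 1)` further parts, and their indices `j` form an arbitrary multiset of that size
drawn from `{0, …, k}`. Stars and bars counts these as
`C(k + n - a - k * (d + 1), n - a - k * (d + 1)) = C(n - a - k * d, n - a - k * d - k)`,
and `k` ranges over `0, …, (n - a) / (d + 1)`.
-/

open Finset

def residuePart (d a j : ℕ) : ℕ := a + j * (d + 1)

section ResiduePart

variable {d a : ℕ}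

theorem residuePart_strictMono (d a : ℕ) : StrictMono (residuePart d a) :=
  fun _ _ h => by unfold residuePart; gcongr

theorem residuePart_mod (j : ℕ) : residuePart d a j % (d + 1) = a % (d + 1) :=
  Nat.add_mul_mod_self_right a j (d + 1)

theorem le_of_mod_eq_of_le_succ (had : a ≤ d + 1) {x : ℕ} (hx : 0 < x)
    (hm : x % (d + 1) = a % (d + 1)) : a ≤ x := by
  rcases had.lt_or_eq with h | rfl
  · rw [Nat.mod_eq_of_lt h] at hm
    exact hm ▸ Nat.mod_le x (d + 1)
  · rw [Nat.mod_self] at hm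
    exact Nat.le_of_dvd hx (Nat.dvd_of_mod_eq_zero hm)

theorem residuePart_sub_div_of_mod_eq (had : a ≤ d + 1) {x : ℕ} (hx : 0 < x)
    (hm : x % (d + 1) = a % (d + 1)) : residuePart d a ((x - a) / (d + 1)) = x := by
  have hax := le_of_mod_eq_of_le_succ had hx hm
  have hdvd : d + 1 ∣ x - a := (Nat.modEq_iff_dvd' hax).mp hm.symm
  rw [residuePart, Nat.div_mul_cancel hdvd]
  omega

end ResiduePart

def partitionOfSym (d a : ℕ) {m : ℕ → ℕ} (p : Σ k, Sym (Fin (k + 1)) (m k)) : List ℕ :=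
  residuePart d a p.1 ::
    ((p.2 : Multiset (Fin (p.1 + 1))).map (residuePart d a ∘ Fin.val)).sort (· ≥ ·)

section PartitionOfSym

variable {d a : ℕ} {m : ℕ → ℕ}

theorem partitionOfSym_injective : Function.Injective (partitionOfSym d a (m := m)) := by
  rintro ⟨k, s⟩ ⟨k', s'⟩ h
  simp only [partitionOfSym, List.cons.injEq] at h
  obtain ⟨hk, hs⟩ := h
  obtain rfl := (residuePart_strictMono d a).injective hk
  have := congrArg (fun l : List ℕ => (l : Multiset ℕ)) hs
  simp only [Multiset.sort_eq] at this
  have hinj : Function.Injective (residuePart d a ∘ Fin.val (n := k + 1)) :=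
    (residuePart_strictMono d a).injective.comp Fin.val_injective
  rw [Sym.coe_injective (Multiset.map_injective hinj this)]

theorem isPartition_partitionOfSym (ha : 0 < a) (p : Σ k, Sym (Fin (k + 1)) (m k)) :
    IsPartition (partitionOfSym d a p) := by
  refine ⟨List.cons_ne_nil _ _, List.pairwise_cons.2 ⟨?_, Multiset.pairwise_sort _ _⟩, ?_⟩
  · intro x hx
    simp only [Multiset.mem_sort, Multiset.mem_map, Function.comp] at hx
    obtain ⟨j, -, rfl⟩ := hx
    exact (residuePart_strictMono d a).monotone (Nat.lt_succ_iff.1 j.2)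
  · intro x hx
    simp only [partitionOfSym, List.mem_cons, Multiset.mem_sort, Multiset.mem_map,
      Function.comp] at hx
    rcases hx with rfl | ⟨j, -, rfl⟩ <;> exact Nat.lt_add_right _ ha

theorem mod_eq_of_mem_partitionOfSym {p : Σ k, Sym (Fin (k + 1)) (m k)} {x : ℕ}
    (hx : x ∈ partitionOfSym d a p) : x % (d + 1) = a % (d + 1) := by
  simp only [partitionOfSym, List.mem_cons, Multiset.mem_sort, Multiset.mem_map,
    Function.comp] at hx
  rcases hx with rfl | ⟨j, -, rfl⟩ <;> exact residuePart_mod _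

theorem perimeter_partitionOfSym (p : Σ k, Sym (Fin (k + 1)) (m k)) :
    perimeter (partitionOfSym d a p) = residuePart d a p.1 + m p.1 := by
  simp [perimeter, partitionOfSym]

theorem mem_range_partitionOfSym (had : a ≤ d + 1) {l : List ℕ} (hl : IsPartition l)
    (hm : ∀ x ∈ l, x % (d + 1) = a % (d + 1))
    (hlen : l.length = m ((l.headI - a) / (d + 1)) + 1) :
    l ∈ Set.range (partitionOfSym d a (m := m)) := by
  obtain ⟨hne, hsort, hpos⟩ := hl
  obtain ⟨h, t, rfl⟩ := List.exists_cons_of_ne_nil hne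
  obtain ⟨hht, htsort⟩ := List.pairwise_cons.1 hsort
  set k := (h - a) / (d + 1)
  have hindex : ∀ x ∈ h :: t, residuePart d a ((x - a) / (d + 1)) = x := fun x hx =>
    residuePart_sub_div_of_mod_eq had (hpos x hx) (hm x hx)
  have hbound : ∀ j ∈ (t : Multiset ℕ).map (fun x => (x - a) / (d + 1)), j < k + 1 := by
    simp only [Multiset.mem_map, Multiset.mem_coe]
    rintro _ ⟨x, hx, rfl⟩
    exact Nat.lt_succ_of_le (Nat.div_le_div_right (Nat.sub_le_sub_right (hht x hx) a))
  lift (t : Multiset ℕ).map (fun x => (x - a) / (d + 1)) to Multiset (Fin (k + 1))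
    using hbound with s hs
  have hcard : Multiset.card s = m k := by
    simpa [← Multiset.card_map Fin.val s, hs] using hlen
  refine ⟨⟨k, Sym.mk s hcard⟩, List.cons_eq_cons.2 ⟨hindex h List.mem_cons_self, ?_⟩⟩
  change (s.map (residuePart d a ∘ Fin.val)).sort _ = t
  have hid : (t : Multiset ℕ).map (residuePart d a ∘ fun x => (x - a) / (d + 1)) = t :=
    (Multiset.map_congr rfl fun x hx => hindex x (List.mem_cons_of_mem h hx)).trans
      (Multiset.map_id _)
  rw [← Multiset.map_map, hs, Multiset.map_map, hid, Multiset.coe_sort,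
    List.mergeSort_eq_self _ htsort]

end PartitionOfSym

theorem mem_range_div_add_one_iff {b c k : ℕ} :
    k ∈ range (b / (c + 1) + 1) ↔ k * (c + 1) ≤ b := by
  rw [mem_range, Nat.lt_succ_iff, Nat.le_div_iff_mul_le c.add_one_pos]

def partitionCodes (d a n : ℕ) : Finset (Σ k, Sym (Fin (k + 1)) (n - a - k * (d + 1))) :=
  (range ((n - a) / (d + 1) + 1)).sigma fun _ => univ

theorem residuePartitions_eq_image {d a n : ℕ} (ha : 0 < a) (had : a ≤ d + 1) (hna : a ≤ n) :
    {l : List ℕ | IsPartition l ∧ perimeter l = n ∧ ∀ x ∈ l, x % (d + 1) = a % (d + 1)} =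
      partitionOfSym d a (m := fun k => n - a - k * (d + 1)) '' ↑(partitionCodes d a n) := by
  ext l
  constructor
  · rintro ⟨hl, hper, hm⟩
    obtain ⟨h, t, rfl⟩ := List.exists_cons_of_ne_nil hl.1
    have hlen : (h :: t).length = n - a - (h - a) / (d + 1) * (d + 1) + 1 := by
      have := residuePart_sub_div_of_mod_eq had (hl.2.2 h List.mem_cons_self)
        (hm h List.mem_cons_self)
      simp only [perimeter, List.headI_cons, List.length_cons] at hper ⊢
      unfold residuePart at this
      omega
    obtain ⟨p, hp⟩ := mem_range_partitionOfSym (m := fun k => n - a - k * (d + 1)) had hl hm hlen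
    refine ⟨p, mem_sigma.2 ⟨mem_range_div_add_one_iff.2 ?_, mem_univ _⟩, hp⟩
    rw [← hp, perimeter_partitionOfSym, residuePart] at hper
    omega
  · rintro ⟨p, hp, rfl⟩
    have hk := mem_range_div_add_one_iff.1 (mem_sigma.1 hp).1
    refine ⟨isPartition_partitionOfSym ha p, ?_, fun x hx => mod_eq_of_mem_partitionOfSym hx⟩
    rw [perimeter_partitionOfSym, residuePart]
    omega

theorem stmt18_general (d a n : ℕ) (ha : 0 < a)
    (had : a ≤ d + 1) (hna : a ≤ n) :
    Nat.card {l : List ℕ // IsPartition l ∧ perimeter l = n ∧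
        ∀ x ∈ l, x % (d + 1) = a % (d + 1)}
      = ∑ k ∈ Finset.range ((n - a) / (d + 1) + 1),
          Nat.choose (n - a - k * d) (n - a - k * d - k) := by
  change Nat.card {l | _} = _
  rw [residuePartitions_eq_image ha had hna, Nat.card_image_of_injective partitionOfSym_injective,
    Nat.card_coe_set_eq, Set.ncard_coe_finset, partitionCodes, card_sigma]
  refine sum_congr rfl fun k hk => ?_
  have hkd := mem_range_div_add_one_iff.1 hk
  rw [card_univ, Sym.card_sym_fin_eq_multichoose, Nat.multichoose_eq]
  rw [Nat.mul_succ] at hkd ⊢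
  congr 1 <;> omega

theorem stmt18 (d a n : ℕ) (hd : 0 < d) (ha : 0 < a) (hn : 0 < n)
    (had : a ≤ d + 1) (hna : a ≤ n) :
    Nat.card {l : List ℕ // IsPartition l ∧ perimeter l = n ∧
        ∀ x ∈ l, x % (d + 1) = a % (d + 1)}
      = ∑ k ∈ Finset.range ((n - a) / (d + 1) + 1),
          Nat.choose (n - a - k * d) (n - a - k * d - k) :=
  stmt18_general d a n ha had hna
end

section
/- For positive integers d, a, n with a < (d+3)/2 and n ≥ a, the number of partitions with perimeter n into parts ≡ ±a (mod d+3) equals the sum over k from 0 to ⌊(n-a)/(d+3)⌋ of C(n - a - kd - k, n - a - kd - 3k), plus the sum over k from 1 to ⌊(n+a)/(d+3)⌋ of C(n + a - kd - k - 1, n + a - kd - 3k). -/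
/-!
Deleting the largest part `M` of a partition of perimeter `n` leaves a nonincreasing list of
`n - M` allowed parts, all at most `M`, i.e. a multiset of size `n - M` drawn from the allowed
parts up to `M`. Hence the count is `∑_M multichoose (#allowed parts ≤ M) (n - M)`. When
`2a < d + 3` the allowed parts are `a + k(d+3)` and `k(d+3) - a`, and up to `M = a + k(d+3)`,
resp. `M = k(d+3) - a`, there are exactly `2k + 1`, resp. `2k`, of them.
-/

open Finset

section NonincreasingLists

variable {α : Type*} [LinearOrder α] (F : Finset α) (r : ℕ)

def nonincreasingListsEquivSym :
    {t : List α // t.Pairwise (· ≥ ·) ∧ t.length = r ∧ ∀ x ∈ t, x ∈ F} ≃ Sym F r where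
  toFun t := ⟨(t.1.pmap Subtype.mk t.2.2.2 : List F), by simp [t.2.2.1]⟩
  invFun s := ⟨(s.1.map Subtype.val).sort (· ≥ ·), Multiset.pairwise_sort _ _, by simp,
    fun x hx => by
      obtain ⟨y, -, rfl⟩ := Multiset.mem_map.1 ((Multiset.mem_sort _).1 hx)
      exact y.2⟩
  left_inv t := by
    apply Subtype.ext
    dsimp only
    refine List.Perm.eq_of_pairwise' (Multiset.pairwise_sort _ _) t.2.1 ?_
    rw [← Multiset.coe_eq_coe, Multiset.sort_eq]
    simp [List.map_pmap]
  right_inv s := Subtype.ext <| Multiset.map_injective Subtype.val_injective <| by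
    conv_rhs => rw [← Multiset.sort_eq (s.1.map Subtype.val) (· ≥ ·)]
    simp [List.map_pmap]

instance : Finite {t : List α // t.Pairwise (· ≥ ·) ∧ t.length = r ∧ ∀ x ∈ t, x ∈ F} :=
  .of_equiv _ (nonincreasingListsEquivSym F r).symm

theorem card_nonincreasingLists :
    Nat.card {t : List α // t.Pairwise (· ≥ ·) ∧ t.length = r ∧ ∀ x ∈ t, x ∈ F}
      = F.card.multichoose r := by
  rw [Nat.card_congr (nonincreasingListsEquivSym F r), Nat.card_eq_fintype_card,
    Sym.card_sym_eq_multichoose, Fintype.card_coe]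

end NonincreasingLists

section Perimeter

variable (p : ℕ → Prop) [DecidablePred p]

def partsUpTo (M : ℕ) : Finset ℕ := {x ∈ Icc 1 M | p x}

variable {p} in
theorem cons_isPartition_perimeter_iff {M n : ℕ} {t : List ℕ} :
    (IsPartition (M :: t) ∧ perimeter (M :: t) = n ∧ ∀ x ∈ M :: t, p x) ↔
      M ∈ partsUpTo p n ∧
        (t.Pairwise (· ≥ ·) ∧ t.length = n - M ∧ ∀ x ∈ t, x ∈ partsUpTo p M) := by
  simp only [IsPartition, perimeter, partsUpTo, mem_filter, mem_Icc, List.pairwise_cons,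
    List.mem_cons, forall_eq_or_imp, List.headI_cons, List.length_cons]
  constructor
  · rintro ⟨⟨-, ⟨hle, ht⟩, hM, hpos⟩, hn, hpM, hp⟩
    exact ⟨⟨⟨hM, by omega⟩, hpM⟩, ht, by omega, fun x hx => ⟨⟨hpos x hx, hle x hx⟩, hp x hx⟩⟩
  · rintro ⟨⟨⟨hM, hMn⟩, hpM⟩, ht, hlen, hparts⟩
    exact ⟨⟨List.cons_ne_nil _ _, ⟨fun x hx => (hparts x hx).1.2, ht⟩, hM,
      fun x hx => (hparts x hx).1.1⟩, by omega, hpM, fun x hx => (hparts x hx).2⟩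

def perimeterPartitionsEquiv (n : ℕ) :
    {l : List ℕ // IsPartition l ∧ perimeter l = n ∧ ∀ x ∈ l, p x} ≃
      Σ M : partsUpTo p n,
        {t : List ℕ // t.Pairwise (· ≥ ·) ∧ t.length = n - M ∧ ∀ x ∈ t, x ∈ partsUpTo p M} where
  toFun
    | ⟨[], h⟩ => absurd rfl h.1.1
    | ⟨M :: t, h⟩ =>
      ⟨⟨M, (cons_isPartition_perimeter_iff.1 h).1⟩, t, (cons_isPartition_perimeter_iff.1 h).2⟩
  invFun x := ⟨x.1 :: x.2.1, cons_isPartition_perimeter_iff.2 ⟨x.1.2, x.2.2⟩⟩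
  left_inv
    | ⟨[], h⟩ => absurd rfl h.1.1
    | ⟨_ :: _, _⟩ => rfl
  right_inv _ := rfl

theorem card_perimeterPartitions (n : ℕ) :
    Nat.card {l : List ℕ // IsPartition l ∧ perimeter l = n ∧ ∀ x ∈ l, p x} =
      ∑ M ∈ partsUpTo p n, (partsUpTo p M).card.multichoose (n - M) := by
  rw [Nat.card_congr (perimeterPartitionsEquiv p n), Nat.card_sigma,
    ← sum_coe_sort (partsUpTo p n)]
  exact sum_congr rfl fun M _ => card_nonincreasingLists _ _

end Perimeter

section PlusMinusResidues

def plusMinusParts (D A M : ℕ) : Finset ℕ :=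
  partsUpTo (fun x => x % D = A % D ∨ (x + A) % D = 0) M

variable {D A : ℕ}

theorem plusMinusParts_eq (hA : 0 < A) (hAD : 2 * A < D) {M : ℕ} (hM : A ≤ M) :
    plusMinusParts D A M = (range ((M - A) / D + 1)).image (fun k => A + k * D) ∪
      (Icc 1 ((M + A) / D)).image (fun k => k * D - A) := by
  have hD : 0 < D := by omega
  ext x
  simp only [plusMinusParts, partsUpTo, mem_filter, mem_Icc, mem_union, mem_image, mem_range,
    Nat.lt_succ_iff, Nat.le_div_iff_mul_le hD]
  constructor
  · rintro ⟨⟨hx1, hxM⟩, hx | hx⟩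
    · have hx : A + x / D * D = x := by
        rw [mul_comm, ← Nat.mod_eq_of_lt (show A < D by omega), ← hx, Nat.mod_add_div]
      exact Or.inl ⟨x / D, by omega, hx⟩
    · obtain ⟨k, hk⟩ := Nat.dvd_of_mod_eq_zero hx
      rw [mul_comm] at hk
      have hk1 : 1 ≤ k := Nat.pos_of_ne_zero (by rintro rfl; omega)
      exact Or.inr ⟨k, ⟨hk1, by omega⟩, by omega⟩
  · rintro (⟨k, hk, rfl⟩ | ⟨k, ⟨hk1, hk⟩, rfl⟩)
    · exact ⟨⟨by omega, by omega⟩, Or.inl (by simp)⟩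
    · have : D ≤ k * D := Nat.le_mul_of_pos_left D hk1
      refine ⟨⟨by omega, by omega⟩, Or.inr ?_⟩
      rw [Nat.sub_add_cancel (by omega), Nat.mul_mod_left]

theorem disjoint_image_add_mul_image_mul_sub (hA : 0 < A) (hAD : 2 * A < D) (s t : Finset ℕ) :
    Disjoint (s.image (fun k => A + k * D)) (t.image (fun k => k * D - A)) := by
  simp only [disjoint_left, mem_image, not_exists, not_and, forall_exists_index, and_imp]
  rintro _ j - rfl k - hjk
  have : (j * D + 2 * A) % D = (k * D) % D := by congr 1; omega
  rw [Nat.mul_mod_left, add_comm, Nat.add_mul_mod_self_right, Nat.mod_eq_of_lt hAD] at this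
  omega

theorem add_mul_injective (hD : 0 < D) : Function.Injective (fun k => A + k * D) :=
  fun _ _ h => Nat.eq_of_mul_eq_mul_right hD (Nat.add_left_cancel h)

theorem mul_sub_injOn (hAD : A < D) : Set.InjOn (fun k => k * D - A) {k | 1 ≤ k} := by
  intro j hj k hk h
  have : D ≤ j * D := Nat.le_mul_of_pos_left D hj
  have : D ≤ k * D := Nat.le_mul_of_pos_left D hk
  have h : j * D - A = k * D - A := h
  have hjk : j * D = k * D := by omega
  exact Nat.eq_of_mul_eq_mul_right (by omega) hjk

theorem card_plusMinusParts (hA : 0 < A) (hAD : 2 * A < D) {M : ℕ} (hM : A ≤ M) :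
    (plusMinusParts D A M).card = (M - A) / D + 1 + (M + A) / D := by
  rw [plusMinusParts_eq hA hAD hM,
    card_union_of_disjoint (disjoint_image_add_mul_image_mul_sub hA hAD _ _),
    card_image_of_injective _ (add_mul_injective (by omega)),
    card_image_of_injOn ((mul_sub_injOn (by omega)).mono fun k hk => (mem_Icc.1 hk).1),
    card_range, Nat.card_Icc, Nat.add_sub_cancel]

theorem card_plusMinusParts_add_mul (hA : 0 < A) (hAD : 2 * A < D) (k : ℕ) :
    (plusMinusParts D A (A + k * D)).card = 2 * k + 1 := by
  have hD : 0 < D := by omega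
  rw [card_plusMinusParts hA hAD (Nat.le_add_right _ _), Nat.add_sub_cancel_left,
    Nat.mul_div_cancel _ hD, show A + k * D + A = 2 * A + k * D by ring,
    Nat.add_mul_div_right _ _ hD, Nat.div_eq_of_lt hAD]
  ring

theorem card_plusMinusParts_mul_sub (hA : 0 < A) (hAD : 2 * A < D) {k : ℕ} (hk : 1 ≤ k) :
    (plusMinusParts D A (k * D - A)).card = 2 * k := by
  have hD : 0 < D := by omega
  obtain ⟨j, rfl⟩ := Nat.exists_eq_add_of_le' hk
  have hjD : (j + 1) * D = j * D + D := by ring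
  rw [card_plusMinusParts hA hAD (by omega), show (j + 1) * D - A - A = D - 2 * A + j * D by omega,
    Nat.sub_add_cancel (by omega), Nat.add_mul_div_right _ _ hD, Nat.div_eq_of_lt (by omega),
    Nat.mul_div_cancel _ hD]
  ring

theorem card_plusMinusPartitions (hA : 0 < A) (hAD : 2 * A < D) {n : ℕ} (hn : A ≤ n) :
    Nat.card {l : List ℕ // IsPartition l ∧ perimeter l = n ∧
        ∀ x ∈ l, x % D = A % D ∨ (x + A) % D = 0} =
      ∑ k ∈ range ((n - A) / D + 1), (2 * k + 1).multichoose (n - (A + k * D)) +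
        ∑ k ∈ Icc 1 ((n + A) / D), (2 * k).multichoose (n - (k * D - A)) := by
  have hD : 0 < D := by omega
  rw [card_perimeterPartitions, ← plusMinusParts, plusMinusParts_eq hA hAD hn,
    sum_union (disjoint_image_add_mul_image_mul_sub hA hAD _ _),
    sum_image (add_mul_injective hD).injOn,
    sum_image ((mul_sub_injOn (by omega)).mono fun k hk => (mem_Icc.1 hk).1)]
  congr 1
  · exact sum_congr rfl fun k _ =>
      congrArg (Nat.multichoose · _) (card_plusMinusParts_add_mul hA hAD k)
  · exact sum_congr rfl fun k hk =>
      congrArg (Nat.multichoose · _) (card_plusMinusParts_mul_sub hA hAD (mem_Icc.1 hk).1)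

end PlusMinusResidues

theorem stmt19_general (d a n : ℕ) (ha : 0 < a)
    (h : 2 * a < d + 3) (hna : a ≤ n) :
    Nat.card {l : List ℕ // IsPartition l ∧ perimeter l = n ∧
        (∀ x ∈ l, x % (d + 3) = a % (d + 3) ∨ (x + a) % (d + 3) = 0)}
      = (∑ k ∈ Finset.range ((n - a) / (d + 3) + 1),
          Nat.choose (n - a - k * d - k) (n - a - k * d - 3 * k))
        + ∑ k ∈ Finset.Icc 1 ((n + a) / (d + 3)),
            Nat.choose (n + a - k * d - k - 1) (n + a - k * d - 3 * k) := by
  have hD : 0 < d + 3 := by omega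
  rw [card_plusMinusPartitions ha h hna]
  congr 1
  · refine sum_congr rfl fun k hk => ?_
    have hk : k * (d + 3) ≤ n - a :=
      (Nat.le_div_iff_mul_le hD).1 (Nat.lt_succ_iff.1 (mem_range.1 hk))
    have hkd : k * (d + 3) = k * d + 3 * k := by ring
    rw [Nat.multichoose_eq]
    congr 1 <;> omega
  · refine sum_congr rfl fun k hk => ?_
    obtain ⟨hk1, hk⟩ := mem_Icc.1 hk
    have hk : k * (d + 3) ≤ n + a := (Nat.le_div_iff_mul_le hD).1 hk
    have hk1 : d + 3 ≤ k * (d + 3) := Nat.le_mul_of_pos_left (d + 3) hk1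
    have hkd : k * (d + 3) = k * d + 3 * k := by ring
    rw [Nat.multichoose_eq]
    congr 1 <;> omega

theorem stmt19 (d a n : ℕ) (hd : 0 < d) (ha : 0 < a) (hn : 0 < n)
    (h : 2 * a < d + 3) (hna : a ≤ n) :
    Nat.card {l : List ℕ // IsPartition l ∧ perimeter l = n ∧
        (∀ x ∈ l, x % (d + 3) = a % (d + 3) ∨ (x + a) % (d + 3) = 0)}
      = (∑ k ∈ Finset.range ((n - a) / (d + 3) + 1),
          Nat.choose (n - a - k * d - k) (n - a - k * d - 3 * k))
        + ∑ k ∈ Finset.Icc 1 ((n + a) / (d + 3)),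
            Nat.choose (n + a - k * d - k - 1) (n + a - k * d - 3 * k) :=
  stmt19_general d a n ha h hna
end
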